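/- The χ-gadget second-moment matrix is an exact 2-design projector: the 4×4 real matrix T_χ = M(3/5, 1/5), whose rows are (1,0,0,0), (0, 1/5, 1/5, √3/5), (0, 1/5, 1/5, √3/5), (0, √3/5, √3/5, 3/5), satisfies T_χ · T_χ = T_χ, is symmetric, and has trace 2; its eigenvalues (with multiplicity) are 1, 1, 0, 0. Hence T_χ is an orthogonal projection of rank 2, coinciding with the matrix representation of the 2-qubit Haar second-moment projector. -/

import Mathlib

/-!
For every `a, c` the matrix `M(a,c)` is diagonalised by the same basis: `e₀` and `(0,1,1,√3)`
are eigenvectors for the eigenvalue `1`, `(0,1,-1,0)` for `1 - 2c - 3(1-a)/2` and `(0,√3,√3,-2)`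
for `(5a-3)/2`. At `(a,c) = (3/5,1/5)` the last two eigenvalues vanish, so `T_χ` is conjugate to
`diag(1,1,0,0)`, which is idempotent with trace `2` and characteristic polynomial `(X-1)²X²`.
-/

open Matrix Polynomial

/-- The matrix representation `M(a,c)` of the second moment operator of an ironed gadget. -/
noncomputable def gadgetMatrix (a c : ℝ) : Matrix (Fin 4) (Fin 4) ℝ :=
  !![1, 0, 0, 0;
     0, 1 - c - (3/2) * (1 - a), c, (Real.sqrt 3 / 2) * (1 - a);
     0, c, 1 - c - (3/2) * (1 - a), (Real.sqrt 3 / 2) * (1 - a);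
     0, (Real.sqrt 3 / 2) * (1 - a), (Real.sqrt 3 / 2) * (1 - a), a]

/-- The second-moment matrix `T_χ = M(3/5, 1/5)` of the χ-gadget. -/
noncomputable def Tchi : Matrix (Fin 4) (Fin 4) ℝ := gadgetMatrix (3/5) (1/5)

theorem IsIdempotentElem.units_conj {M : Type*} [Monoid M] (u : Mˣ) {a : M}
    (ha : IsIdempotentElem a) : IsIdempotentElem (↑u * a * ↑u⁻¹) := by
  simp only [IsIdempotentElem, mul_assoc, Units.inv_mul_cancel_left, ha.mul_self_mul]

theorem Matrix.isIdempotentElem_diagonal_iff {n R : Type*} [DecidableEq n] [Fintype n]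
    [Semiring R] {d : n → R} : IsIdempotentElem (diagonal d) ↔ ∀ i, IsIdempotentElem (d i) := by
  simp only [IsIdempotentElem, diagonal_mul_diagonal, diagonal_eq_diagonal_iff]

noncomputable def gadgetEigenvectors : Matrix (Fin 4) (Fin 4) ℝ :=
  !![1, 0, 0, 0;
     0, 1, 1, √3;
     0, 1, -1, √3;
     0, √3, 0, -2]

/-- The columns of `gadgetEigenvectors` are orthogonal with squared norms `1, 5, 2, 10`,
so its inverse has these columns, rescaled, as rows. -/
noncomputable def gadgetEigenvectorsInv : Matrix (Fin 4) (Fin 4) ℝ :=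
  !![1, 0, 0, 0;
     0, 1/5, 1/5, √3/5;
     0, 1/2, -1/2, 0;
     0, √3/10, √3/10, -1/5]

theorem gadgetEigenvectorsInv_mul : gadgetEigenvectorsInv * gadgetEigenvectors = 1 := by
  ext i j
  fin_cases i <;> fin_cases j <;>
    simp [gadgetEigenvectorsInv, gadgetEigenvectors, mul_apply, Fin.sum_univ_four] <;>
    ring_nf <;> norm_num

noncomputable def gadgetEigenbasis : (Matrix (Fin 4) (Fin 4) ℝ)ˣ where
  val := gadgetEigenvectors
  inv := gadgetEigenvectorsInv
  val_inv := mul_eq_one_comm.mp gadgetEigenvectorsInv_mul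
  inv_val := gadgetEigenvectorsInv_mul

noncomputable def gadgetEigenvalues (a c : ℝ) : Fin 4 → ℝ :=
  ![1, 1, 1 - 2 * c - 3/2 * (1 - a), (5 * a - 3) / 2]

theorem gadgetMatrix_mul_eigenvectors (a c : ℝ) :
    gadgetMatrix a c * gadgetEigenvectors =
      gadgetEigenvectors * diagonal (gadgetEigenvalues a c) := by
  ext i j
  fin_cases i <;> fin_cases j <;>
    simp [gadgetMatrix, gadgetEigenvectors, gadgetEigenvalues, mul_apply, Fin.sum_univ_four] <;>
    ring_nf <;> norm_num <;> ring

theorem gadgetMatrix_eq_conj (a c : ℝ) :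
    gadgetMatrix a c =
      (gadgetEigenbasis : Matrix (Fin 4) (Fin 4) ℝ) * diagonal (gadgetEigenvalues a c) *
        (↑gadgetEigenbasis⁻¹ : Matrix (Fin 4) (Fin 4) ℝ) :=
  (Units.eq_mul_inv_iff_mul_eq _).mpr (gadgetMatrix_mul_eigenvectors a c)

theorem isSymm_gadgetMatrix (a c : ℝ) : (gadgetMatrix a c).IsSymm := by
  ext i j
  fin_cases i <;> fin_cases j <;> rfl

theorem trace_gadgetMatrix (a c : ℝ) : (gadgetMatrix a c).trace = 4 * a - 2 * c := by
  simp [trace, gadgetMatrix, Fin.sum_univ_four]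
  ring

theorem charpoly_gadgetMatrix (a c : ℝ) :
    (gadgetMatrix a c).charpoly = ∏ i, (X - C (gadgetEigenvalues a c i)) := by
  rw [gadgetMatrix_eq_conj, coe_units_inv, charpoly_units_conj, charpoly_diagonal]

theorem isIdempotentElem_gadgetMatrix {a c : ℝ}
    (h : ∀ i, IsIdempotentElem (gadgetEigenvalues a c i)) :
    IsIdempotentElem (gadgetMatrix a c) := by
  rw [gadgetMatrix_eq_conj]
  exact (isIdempotentElem_diagonal_iff.mpr h).units_conj _

/-- **The χ-gadget second-moment matrix is an exact 2-design projector**: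
`T_χ = M(3/5,1/5)` is idempotent, symmetric, has trace 2, and has eigenvalues
(with multiplicity) `1, 1, 0, 0`; hence `T_χ` is an orthogonal projection of rank 2,
coinciding with the 2-qubit Haar second-moment projector. -/
theorem chi_gadget_projector :
    Tchi * Tchi = Tchi ∧
    Tchi.IsSymm ∧
    Tchi.trace = 2 ∧
    Tchi.charpoly = (X - 1) ^ 2 * X ^ 2 := by
  have eigenvalues_eq : gadgetEigenvalues (3/5) (1/5) = ![1, 1, 0, 0] := by
    ext i
    fin_cases i <;> norm_num [gadgetEigenvalues]
  refine ⟨?_, isSymm_gadgetMatrix _ _, ?_, ?_⟩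
  · refine isIdempotentElem_gadgetMatrix fun i => ?_
    rw [eigenvalues_eq]
    fin_cases i <;> simp [IsIdempotentElem]
  · rw [Tchi, trace_gadgetMatrix]
    norm_num
  · rw [Tchi, charpoly_gadgetMatrix, eigenvalues_eq]
    simp [Fin.prod_univ_four]
    ring
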